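/- Let (M, φ, ρ) be a Q-graded Long H-dimodule over a Q-graded Hopf quasigroup H. Then for each q ∈ Q the map R_q: M_q⊗M_q → M_q⊗M_q, R_q(m⊗n) = n_{(1)}·m ⊗ n_{(0)}, is a solution of the Long equation R^{12}R^{23} = R^{23}R^{12} on M_q⊗M_q⊗M_q. -/

import Mathlib

/-! For an `H_e`-module `W` put `R_W (w ⊗ v) = v₍₁₎ · w ⊗ v₍₀₎` (`longMap`), so that `R_q = R_{M_q}`.
Up to reassociation, `R²³` is `R_{M_q ⊗ M_q}` for the action of `H_e` on the second factor.
The compatibility `ρ(h · m) = h · m₍₀₎ ⊗ m₍₁₎` says that `R_q` commutes with `id ⊗ (h · -)`,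
i.e. `R¹² = R_q ⊗ id` is `H_e`-linear for that action, and `R_W` is natural in `W`;
hence `R¹²` commutes with `R²³`. -/

open TensorProduct

universe u v w

/-- A quasigroup: a set with product, identity `e`, and two-sided inverses satisfying
`p⁻¹(pq) = q` and `(qp)p⁻¹ = q`. -/
structure QuasigroupStruct (Q : Type u) where
  mul : Q → Q → Q
  one : Q
  inv : Q → Q
  mul_one : ∀ p, mul p one = p
  one_mul : ∀ p, mul one p = p
  inv_mul_cancel : ∀ p q, mul (inv p) (mul p q) = q
  mul_inv_cancel : ∀ p q, mul (mul q p) (inv p) = q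

namespace QuasigroupStruct

variable {Q : Type u} (G : QuasigroupStruct Q)

lemma inv_mul_self (p : Q) : G.mul (G.inv p) p = G.one := by
  have h := G.inv_mul_cancel p G.one
  rwa [G.mul_one] at h

lemma mul_inv_self (p : Q) : G.mul p (G.inv p) = G.one := by
  have h := G.mul_inv_cancel p G.one
  rwa [G.one_mul] at h

lemma inv_inv (p : Q) : G.inv (G.inv p) = p := by
  have h := G.inv_mul_cancel (G.inv p) p
  rw [G.inv_mul_self p] at h
  rwa [G.mul_one] at h

lemma mul_inv_cancel_left (p q : Q) : G.mul p (G.mul (G.inv p) q) = q := by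
  have h := G.inv_mul_cancel (G.inv p) q
  rwa [G.inv_inv] at h

lemma inv_mul_cancel_right (p q : Q) : G.mul (G.mul q (G.inv p)) p = q := by
  have h := G.mul_inv_cancel (G.inv p) q
  rwa [G.inv_inv] at h

lemma mul_inv_rev (p q : Q) : G.inv (G.mul p q) = G.mul (G.inv q) (G.inv p) := by
  have h1 : G.mul q (G.inv (G.mul p q)) = G.inv p := by
    have h := G.mul_inv_cancel (G.mul p q) (G.inv p)
    rwa [G.inv_mul_cancel p q] at h
  calc G.inv (G.mul p q)
      = G.mul (G.inv q) (G.mul q (G.inv (G.mul p q))) := (G.inv_mul_cancel q _).symm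
    _ = G.mul (G.inv q) (G.inv p) := by rw [h1]

lemma inv_one : G.inv G.one = G.one := by
  have h := G.inv_mul_cancel G.one G.one
  rwa [G.one_mul, G.mul_one] at h

end QuasigroupStruct

/-- Transport along an equality of grades, as a linear map. -/
def gcl {Q : Type u} {H : Q → Type w} {k : Type v} [CommSemiring k]
    [∀ p, AddCommMonoid (H p)] [∀ p, Module k (H p)] {p q : Q} (e : p = q) :
    H p →ₗ[k] H q := by subst e; exact LinearMap.id

/-- A `Q`-graded Hopf quasigroup: a family of coassociative counital coalgebras `H p`
with a (not necessarily associative) graded multiplication, unit and antipode family,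
such that the multiplications and the unit are coalgebra maps and the antipode
satisfies the Hopf quasigroup axioms. -/
structure GradedHopfQuasigroup (k : Type v) [CommRing k] {Q : Type u} (G : QuasigroupStruct Q)
    (H : Q → Type w) [∀ p, AddCommGroup (H p)] [∀ p, Module k (H p)]
    [∀ p, Coalgebra k (H p)] where
  mul : ∀ p q, H p →ₗ[k] H q →ₗ[k] H (G.mul p q)
  one : H G.one
  antipode : ∀ p, H p →ₗ[k] H (G.inv p)
  mul_one' : ∀ (p : Q) (h : H p), gcl (k := k) (G.mul_one p) ((mul p G.one h) one) = h
  one_mul' : ∀ (p : Q) (h : H p), gcl (k := k) (G.one_mul p) ((mul G.one p one) h) = h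
  comul_mul : ∀ (p q : Q) (h : H p) (g : H q),
    Coalgebra.comul (R := k) ((mul p q h) g) =
      (TensorProduct.map (TensorProduct.lift (mul p q)) (TensorProduct.lift (mul p q)))
        ((TensorProduct.tensorTensorTensorComm k (H p) (H p) (H q) (H q))
          (Coalgebra.comul h ⊗ₜ[k] Coalgebra.comul g))
  counit_mul : ∀ (p q : Q) (h : H p) (g : H q),
    Coalgebra.counit (R := k) ((mul p q h) g) =
      Coalgebra.counit (R := k) h * Coalgebra.counit (R := k) g
  comul_one : Coalgebra.comul (R := k) one = one ⊗ₜ[k] one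
  counit_one : Coalgebra.counit (R := k) one = 1
  /-- `S (h₁) (h₂ g) = ε(h) g` -/
  antipode_mul_left : ∀ (p q : Q) (h : H p) (g : H q),
    TensorProduct.lift
      (((mul (G.inv p) (G.mul p q)).comp (antipode p)).compl₂ ((mul p q).flip g))
      (Coalgebra.comul h)
      = gcl (k := k) (G.inv_mul_cancel p q).symm (Coalgebra.counit (R := k) h • g)
  /-- `h₁ (S (h₂) g) = ε(h) g` -/
  antipode_mul_left' : ∀ (p q : Q) (h : H p) (g : H q),
    TensorProduct.lift
      ((mul p (G.mul (G.inv p) q)).compl₂ (((mul (G.inv p) q).flip g).comp (antipode p)))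
      (Coalgebra.comul h)
      = gcl (k := k) (G.mul_inv_cancel_left p q).symm (Coalgebra.counit (R := k) h • g)
  /-- `(g S (h₁)) h₂ = ε(h) g` -/
  antipode_mul_right : ∀ (p q : Q) (h : H p) (g : H q),
    TensorProduct.lift
      ((mul (G.mul q (G.inv p)) p).comp ((mul q (G.inv p) g).comp (antipode p)))
      (Coalgebra.comul h)
      = gcl (k := k) (G.inv_mul_cancel_right p q).symm (Coalgebra.counit (R := k) h • g)
  /-- `(g h₁) S (h₂) = ε(h) g` -/
  antipode_mul_right' : ∀ (p q : Q) (h : H p) (g : H q),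
    TensorProduct.lift
      (((mul (G.mul q p) (G.inv p)).comp (mul q p g)).compl₂ (antipode p))
      (Coalgebra.comul h)
      = gcl (k := k) (G.mul_inv_cancel p q).symm (Coalgebra.counit (R := k) h • g)

variable {k : Type v} [Field k] {Q : Type u} {G : QuasigroupStruct Q}
  {H : Q → Type w} [∀ p, AddCommGroup (H p)] [∀ p, Module k (H p)]
  [∀ p, Coalgebra k (H p)]

/-- A `Q`-graded `H`-quasimodule. -/
structure GradedQuasimodule (A : GradedHopfQuasigroup k G H) (M : Q → Type w)
    [∀ q, AddCommGroup (M q)] [∀ q, Module k (M q)] where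
  act : ∀ p q, H p →ₗ[k] M q →ₗ[k] M (G.mul p q)
  one_act : ∀ (q : Q) (m : M q), gcl (k := k) (G.one_mul q) ((act G.one q A.one) m) = m
  quasi_left : ∀ (p q : Q) (h : H p) (m : M q),
    TensorProduct.lift ((act p (G.mul (G.inv p) q)).compl₂
        (((act (G.inv p) q).flip m).comp (A.antipode p))) (Coalgebra.comul h)
      = gcl (k := k) (G.mul_inv_cancel_left p q).symm (Coalgebra.counit (R := k) h • m)
  quasi_left' : ∀ (p q : Q) (h : H p) (m : M q),
    TensorProduct.lift (((act (G.inv p) (G.mul p q)).comp (A.antipode p)).compl₂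
        ((act p q).flip m)) (Coalgebra.comul h)
      = gcl (k := k) (G.inv_mul_cancel p q).symm (Coalgebra.counit (R := k) h • m)

/-- A `Q`-graded Long `H`-dimodule: a graded quasimodule together with
coassociative counital right `H_e`-comodule structures compatible with the action. -/
structure GradedLongDimodule (A : GradedHopfQuasigroup k G H) (M : Q → Type w)
    [∀ q, AddCommGroup (M q)] [∀ q, Module k (M q)]
    extends GradedQuasimodule A M where
  coact : ∀ q, M q →ₗ[k] M q ⊗[k] H G.one
  coact_coassoc : ∀ (q : Q) (m : M q),
    (TensorProduct.assoc k (M q) (H G.one) (H G.one))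
        ((LinearMap.rTensor (H G.one) (coact q)) (coact q m))
      = (LinearMap.lTensor (M q) (Coalgebra.comul (R := k))) (coact q m)
  coact_counit : ∀ (q : Q) (m : M q),
    (TensorProduct.rid k (M q))
        ((LinearMap.lTensor (M q) (Coalgebra.counit (R := k))) (coact q m)) = m
  /-- `ρ(h·m) = h·m₍₀₎ ⊗ m₍₁₎` -/
  coact_act : ∀ (p q : Q) (h : H p) (m : M q),
    coact (G.mul p q) ((act p q h) m)
      = (LinearMap.rTensor (H G.one) ((act p q) h)) (coact q m)

/-- The map `R_q(m ⊗ n) = n₍₁₎ · m ⊗ n₍₀₎`. -/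
noncomputable def longR {A : GradedHopfQuasigroup k G H} {M : Q → Type w}
    [∀ q, AddCommGroup (M q)] [∀ q, Module k (M q)]
    (P : GradedLongDimodule A M) (q : Q) :
    M q ⊗[k] M q →ₗ[k] M q ⊗[k] M q :=
  (TensorProduct.comm k (M q) (M q)).toLinearMap ∘ₗ
    (LinearMap.lTensor (M q)
      ((gcl (k := k) (G.one_mul q)) ∘ₗ
        (TensorProduct.lift (P.act G.one q)) ∘ₗ
          (TensorProduct.comm k (M q) (H G.one)).toLinearMap)) ∘ₗ
      (TensorProduct.leftComm k (M q) (M q) (H G.one)).toLinearMap ∘ₗ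
        (LinearMap.lTensor (M q) (P.coact q))

section LongMap

open LinearMap

variable {R C U V V' W W' : Type*} [CommSemiring R]
  [AddCommMonoid C] [Module R C] [AddCommMonoid U] [Module R U]
  [AddCommMonoid V] [Module R V] [AddCommMonoid V'] [Module R V']
  [AddCommMonoid W] [Module R W] [AddCommMonoid W'] [Module R W']

noncomputable def longMap (ρ : V →ₗ[R] V ⊗[R] C) (act : C →ₗ[R] W →ₗ[R] W) :
    W ⊗[R] V →ₗ[R] W ⊗[R] V :=
  (TensorProduct.comm R V W).toLinearMap ∘ₗ lTensor V (lift act.flip) ∘ₗ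
    (leftComm R W V C).toLinearMap ∘ₗ lTensor W ρ

lemma longMap_tmul (ρ : V →ₗ[R] V ⊗[R] C) (act : C →ₗ[R] W →ₗ[R] W) (w : W) (v : V) :
    longMap ρ act (w ⊗ₜ v) = TensorProduct.comm R V W (lTensor V (act.flip w) (ρ v)) := by
  simp only [longMap, coe_comp, Function.comp_apply, LinearEquiv.coe_coe, lTensor_tmul]
  induction ρ v using TensorProduct.induction_on with
  | zero => simp
  | tmul v c => simp
  | add x y hx hy => simp only [tmul_add, map_add, hx, hy]

lemma rTensor_comp_longMap {ρ : V →ₗ[R] V ⊗[R] C} {act : C →ₗ[R] W →ₗ[R] W}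
    {act' : C →ₗ[R] W' →ₗ[R] W'} (f : W →ₗ[R] W') (hf : ∀ c, f ∘ₗ act c = act' c ∘ₗ f) :
    rTensor V f ∘ₗ longMap ρ act = longMap ρ act' ∘ₗ rTensor V f := by
  refine TensorProduct.ext' fun w v => ?_
  have hfw (c : C) : f (act c w) = act' c (f w) := congr($(hf c) w)
  simp only [coe_comp, Function.comp_apply, longMap_tmul, rTensor_tmul]
  induction ρ v using TensorProduct.induction_on with
  | zero => simp
  | tmul v c => simp [hfw]
  | add x y hx hy => simp only [map_add, hx, hy]

lemma longMap_comp_lTensor {ρ : V →ₗ[R] V ⊗[R] C} {ρ' : V' →ₗ[R] V' ⊗[R] C}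
    {act : C →ₗ[R] W →ₗ[R] W} (g : V →ₗ[R] V') (hg : ρ' ∘ₗ g = rTensor C g ∘ₗ ρ) :
    longMap ρ' act ∘ₗ lTensor W g = lTensor W g ∘ₗ longMap ρ act := by
  refine TensorProduct.ext' fun w v => ?_
  simp only [coe_comp, Function.comp_apply, longMap_tmul, lTensor_tmul]
  rw [← comp_apply ρ' g, hg, comp_apply]
  induction ρ v using TensorProduct.induction_on with
  | zero => simp
  | tmul v c => simp
  | add x y hx hy => simp only [map_add, hx, hy]

lemma longMap_lTensorHom (ρ : V →ₗ[R] V ⊗[R] C) (act : C →ₗ[R] W →ₗ[R] W) :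
    longMap ρ (lTensorHom U ∘ₗ act) =
      (TensorProduct.assoc R U W V).symm.toLinearMap ∘ₗ lTensor U (longMap ρ act) ∘ₗ
        (TensorProduct.assoc R U W V).toLinearMap := by
  refine TensorProduct.ext_threefold fun u w v => ?_
  simp only [coe_comp, Function.comp_apply, LinearEquiv.coe_coe, assoc_tmul, lTensor_tmul,
    longMap_tmul]
  induction ρ v using TensorProduct.induction_on with
  | zero => simp
  | tmul v c => simp
  | add x y hx hy => simp only [tmul_add, map_add, hx, hy]

theorem longMap_long_equation (ρ : V →ₗ[R] V ⊗[R] C) (act : C →ₗ[R] V →ₗ[R] V)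
    (hρ : ∀ c, ρ ∘ₗ act c = rTensor C (act c) ∘ₗ ρ) :
    ((TensorProduct.assoc R V V V).toLinearMap ∘ₗ rTensor V (longMap ρ act) ∘ₗ
        (TensorProduct.assoc R V V V).symm.toLinearMap) ∘ₗ lTensor V (longMap ρ act)
      = lTensor V (longMap ρ act) ∘ₗ ((TensorProduct.assoc R V V V).toLinearMap ∘ₗ
          rTensor V (longMap ρ act) ∘ₗ (TensorProduct.assoc R V V V).symm.toLinearMap) := by
  have h23 : lTensor V (longMap ρ act) = (TensorProduct.assoc R V V V).toLinearMap ∘ₗ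
      longMap ρ (lTensorHom V ∘ₗ act) ∘ₗ (TensorProduct.assoc R V V V).symm.toLinearMap := by
    rw [longMap_lTensorHom]
    ext x
    simp
  have hcomm : rTensor V (longMap ρ act) ∘ₗ longMap ρ (lTensorHom V ∘ₗ act) =
      longMap ρ (lTensorHom V ∘ₗ act) ∘ₗ rTensor V (longMap ρ act) :=
    rTensor_comp_longMap _ fun c => longMap_comp_lTensor (act c) (hρ c)
  rw [h23]
  refine LinearMap.ext fun x => ?_
  simpa using congr(TensorProduct.assoc R V V V ($hcomm ((TensorProduct.assoc R V V V).symm x)))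

end LongMap

namespace GradedLongDimodule

variable {A : GradedHopfQuasigroup k G H} {M : Q → Type w}
  [∀ q, AddCommGroup (M q)] [∀ q, Module k (M q)]

lemma coact_gcl (P : GradedLongDimodule A M) {p q : Q} (e : p = q) (m : M p) :
    P.coact q (gcl (k := k) e m) =
      LinearMap.rTensor (H G.one) (gcl (k := k) e) (P.coact p m) := by
  subst e
  exact (LinearMap.rTensor_id_apply _ _ _).symm

lemma coact_comp_act_one (P : GradedLongDimodule A M) (q : Q) (h : H G.one) :
    P.coact q ∘ₗ (P.act G.one q).compr₂ (gcl (k := k) (G.one_mul q)) h =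
      LinearMap.rTensor (H G.one) ((P.act G.one q).compr₂ (gcl (k := k) (G.one_mul q)) h) ∘ₗ
        P.coact q := by
  ext m
  simp only [LinearMap.comp_apply, LinearMap.compr₂_apply, coact_gcl, P.coact_act,
    ← LinearMap.rTensor_comp_apply]
  rfl

lemma longR_eq_longMap (P : GradedLongDimodule A M) (q : Q) :
    longR P q = longMap (P.coact q) ((P.act G.one q).compr₂ (gcl (k := k) (G.one_mul q))) := by
  unfold longR longMap
  congr 3
  ext m h
  rfl

end GradedLongDimodule

/-- `R_q` solves the Long equation `R¹²R²³ = R²³R¹²` on `M_q ⊗ M_q ⊗ M_q`. -/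
theorem gradedLongDimodule_long_equation {A : GradedHopfQuasigroup k G H}
    {M : Q → Type w} [∀ q, AddCommGroup (M q)] [∀ q, Module k (M q)]
    (P : GradedLongDimodule A M) (q : Q) :
    (((TensorProduct.assoc k (M q) (M q) (M q)).toLinearMap ∘ₗ
        (LinearMap.rTensor (M q) (longR P q)) ∘ₗ
          (TensorProduct.assoc k (M q) (M q) (M q)).symm.toLinearMap) ∘ₗ
      LinearMap.lTensor (M q) (longR P q))
    = (LinearMap.lTensor (M q) (longR P q)) ∘ₗ
        ((TensorProduct.assoc k (M q) (M q) (M q)).toLinearMap ∘ₗ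
          (LinearMap.rTensor (M q) (longR P q)) ∘ₗ
            (TensorProduct.assoc k (M q) (M q) (M q)).symm.toLinearMap) := by
  rw [P.longR_eq_longMap q]
  exact longMap_long_equation _ _ (P.coact_comp_act_one q)
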